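/- Exchange relation between D and the braiding matrices (Proposition 1, eq. (2.24), first relation): Assume ι : A → V is a ℂ-algebra homomorphism satisfying the covariance property (1 ⊗ ι(x)) · Φ = Φ · ((id_A ⊗ ι)(Δᵒᵖ(x))) for all x ∈ A. Set N := (id_A ⊗ ι)(R · τ(R)) ∈ A ⊗ V and D := Φ · N · Φ⁻¹ ∈ A ⊗ V. Then in A ⊗ A ⊗ V: D₁₃ · R̂₋ = R̂₊ · (Φ₂ · D₁₃ · Φ₂⁻¹), where D₁₃ places D's A-leg in position 1 and V-leg in position 3. (In the paper's notation: D¹ R̂₋ = R̂₊ σ²(D).) -/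

import Mathlib

open scoped TensorProduct

noncomputable section

namespace Stmt6

variable (A V : Type*) [Ring A] [Bialgebra ℂ A] [Ring V] [Algebra ℂ V]

/-- Map units along a `ℂ`-algebra homomorphism. -/
def uMap {X Y : Type*} [Semiring X] [Semiring Y] [Algebra ℂ X] [Algebra ℂ Y] (f : X →ₐ[ℂ] Y) :
    Xˣ →* Yˣ :=
  Units.map (f : X →* Y)

/-- Embedding of `A ⊗ A` into `A ⊗ A ⊗ A` with legs in positions 1 and 2. -/
def a12 : A ⊗[ℂ] A →ₐ[ℂ] A ⊗[ℂ] (A ⊗[ℂ] A) :=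
  Algebra.TensorProduct.map (AlgHom.id ℂ A) Algebra.TensorProduct.includeLeft

/-- Embedding of `A ⊗ A` into `A ⊗ A ⊗ A` with legs in positions 1 and 3. -/
def a13 : A ⊗[ℂ] A →ₐ[ℂ] A ⊗[ℂ] (A ⊗[ℂ] A) :=
  Algebra.TensorProduct.map (AlgHom.id ℂ A) Algebra.TensorProduct.includeRight

/-- Embedding of `A ⊗ A` into `A ⊗ A ⊗ A` with legs in positions 2 and 3. -/
def a23 : A ⊗[ℂ] A →ₐ[ℂ] A ⊗[ℂ] (A ⊗[ℂ] A) :=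
  Algebra.TensorProduct.includeRight

/-- `Δ ⊗ id_A : A ⊗ A → A ⊗ A ⊗ A`. -/
def deltaIdA : A ⊗[ℂ] A →ₐ[ℂ] A ⊗[ℂ] (A ⊗[ℂ] A) :=
  (Algebra.TensorProduct.assoc ℂ ℂ ℂ A A A).toAlgHom.comp
    (Algebra.TensorProduct.map (Bialgebra.comulAlgHom ℂ A) (AlgHom.id ℂ A))

/-- `id_A ⊗ Δ : A ⊗ A → A ⊗ A ⊗ A`. -/
def idDeltaA : A ⊗[ℂ] A →ₐ[ℂ] A ⊗[ℂ] (A ⊗[ℂ] A) :=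
  Algebra.TensorProduct.map (AlgHom.id ℂ A) (Bialgebra.comulAlgHom ℂ A)

/-- Embedding of `A ⊗ V` into `A ⊗ A ⊗ V` with legs in positions 1 and 3. -/
def leg13 : A ⊗[ℂ] V →ₐ[ℂ] A ⊗[ℂ] (A ⊗[ℂ] V) :=
  Algebra.TensorProduct.map (AlgHom.id ℂ A) Algebra.TensorProduct.includeRight

/-- Embedding of `A ⊗ V` into `A ⊗ A ⊗ V` with legs in positions 2 and 3. -/
def leg23 : A ⊗[ℂ] V →ₐ[ℂ] A ⊗[ℂ] (A ⊗[ℂ] V) :=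
  Algebra.TensorProduct.includeRight

/-- Embedding of `A ⊗ A` into `A ⊗ A ⊗ V` with legs in positions 1 and 2,
i.e. `X ↦ X ⊗ 1_V`. -/
def leg12 : A ⊗[ℂ] A →ₐ[ℂ] A ⊗[ℂ] (A ⊗[ℂ] V) :=
  Algebra.TensorProduct.map (AlgHom.id ℂ A) Algebra.TensorProduct.includeLeft

/-- `Δ ⊗ id_V : A ⊗ V → A ⊗ A ⊗ V`. -/
def deltaId : A ⊗[ℂ] V →ₐ[ℂ] A ⊗[ℂ] (A ⊗[ℂ] V) :=
  (Algebra.TensorProduct.assoc ℂ ℂ ℂ A A V).toAlgHom.comp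
    (Algebra.TensorProduct.map (Bialgebra.comulAlgHom ℂ A) (AlgHom.id ℂ V))

/-- The fusion element `F = Φ₂ · Φ₁ · ((Δ ⊗ id_V)(Φ))⁻¹ ∈ A ⊗ A ⊗ V`. -/
def fusion (Φ : (A ⊗[ℂ] V)ˣ) : (A ⊗[ℂ] (A ⊗[ℂ] V))ˣ :=
  uMap (leg23 A V) Φ * uMap (leg13 A V) Φ * (uMap (deltaId A V) Φ)⁻¹

/-- The flip automorphism `τ₁₂` of `A ⊗ A ⊗ V` exchanging the two `A`-factors. -/
def tau12 : (A ⊗[ℂ] (A ⊗[ℂ] V)) ≃ₐ[ℂ] (A ⊗[ℂ] (A ⊗[ℂ] V)) :=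
  (Algebra.TensorProduct.assoc ℂ ℂ ℂ A A V).symm.trans
    ((Algebra.TensorProduct.congr (Algebra.TensorProduct.comm ℂ A A) AlgEquiv.refl).trans
      (Algebra.TensorProduct.assoc ℂ ℂ ℂ A A V))

/-- The braiding element `R̂₊ = τ₁₂(F) · (R ⊗ 1_V) · F⁻¹`. -/
def rrPlus (R : (A ⊗[ℂ] A)ˣ) (Φ : (A ⊗[ℂ] V)ˣ) : (A ⊗[ℂ] (A ⊗[ℂ] V))ˣ :=
  uMap (tau12 A V).toAlgHom (fusion A V Φ) * uMap (leg12 A V) R * (fusion A V Φ)⁻¹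

/-- The braiding element `R̂₋ = τ₁₂(F) · (τ(R)⁻¹ ⊗ 1_V) · F⁻¹`. -/
def rrMinus (R : (A ⊗[ℂ] A)ˣ) (Φ : (A ⊗[ℂ] V)ˣ) : (A ⊗[ℂ] (A ⊗[ℂ] V))ˣ :=
  uMap (tau12 A V).toAlgHom (fusion A V Φ) *
    uMap (leg12 A V) ((uMap (Algebra.TensorProduct.comm ℂ A A).toAlgHom R)⁻¹) *
    (fusion A V Φ)⁻¹

set_option maxHeartbeats 1600000 in
/-- `N = (id_A ⊗ ι)(R · τ(R)) ∈ A ⊗ V`, as a unit. -/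
def nElt (ι : A →ₐ[ℂ] V) (R : (A ⊗[ℂ] A)ˣ) : (A ⊗[ℂ] V)ˣ :=
  uMap (Algebra.TensorProduct.map (AlgHom.id ℂ A) ι)
    (R * uMap (Algebra.TensorProduct.comm ℂ A A).toAlgHom R)

/-- `D = Φ · N · Φ⁻¹ ∈ A ⊗ V`, as a unit. -/
def dElt (ι : A →ₐ[ℂ] V) (R : (A ⊗[ℂ] A)ˣ) (Φ : (A ⊗[ℂ] V)ˣ) : (A ⊗[ℂ] V)ˣ :=
  Φ * nElt A V ι R * Φ⁻¹


/-! ### Auxiliary definitions for the proof -/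

/-- `id_A ⊗ ι : A ⊗ A → A ⊗ V`. -/
def riM (ι : A →ₐ[ℂ] V) : A ⊗[ℂ] A →ₐ[ℂ] A ⊗[ℂ] V :=
  Algebra.TensorProduct.map (AlgHom.id ℂ A) ι

/-- The flip of `A ⊗ A` as an algebra hom. -/
def commA : A ⊗[ℂ] A →ₐ[ℂ] A ⊗[ℂ] A :=
  (Algebra.TensorProduct.comm ℂ A A).toAlgHom

/-- `id ⊗ id ⊗ ι : A ⊗ A ⊗ A → A ⊗ A ⊗ V`. -/
def iota3 (ι : A →ₐ[ℂ] V) : A ⊗[ℂ] (A ⊗[ℂ] A) →ₐ[ℂ] A ⊗[ℂ] (A ⊗[ℂ] V) :=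
  Algebra.TensorProduct.map (AlgHom.id ℂ A) (riM A V ι)

/-- Flip of the last two legs of `A ⊗ A ⊗ A`. -/
def tauLast : A ⊗[ℂ] (A ⊗[ℂ] A) →ₐ[ℂ] A ⊗[ℂ] (A ⊗[ℂ] A) :=
  Algebra.TensorProduct.map (AlgHom.id ℂ A) (commA A)

/-- The cyclic rotation `x ⊗ y ⊗ z ↦ z ⊗ x ⊗ y` of `A ⊗ A ⊗ A`. -/
def sigmaA : A ⊗[ℂ] (A ⊗[ℂ] A) →ₐ[ℂ] A ⊗[ℂ] (A ⊗[ℂ] A) :=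
  (Algebra.TensorProduct.comm ℂ (A ⊗[ℂ] A) A).toAlgHom.comp
    (Algebra.TensorProduct.assoc ℂ ℂ ℂ A A A).symm.toAlgHom

/-- `id ⊗ Δᵒᵖ : A ⊗ A → A ⊗ A ⊗ A`. -/
def idDop : A ⊗[ℂ] A →ₐ[ℂ] A ⊗[ℂ] (A ⊗[ℂ] A) :=
  Algebra.TensorProduct.map (AlgHom.id ℂ A) ((commA A).comp (Bialgebra.comulAlgHom ℂ A))

lemma uMap_uMap {X Y Z : Type*} [Semiring X] [Semiring Y] [Semiring Z]
    [Algebra ℂ X] [Algebra ℂ Y] [Algebra ℂ Z] (f : Y →ₐ[ℂ] Z) (g : X →ₐ[ℂ] Y) (u : Xˣ) :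
    uMap f (uMap g u) = uMap (f.comp g) u := rfl

lemma uMap_val {X Y : Type*} [Semiring X] [Semiring Y] [Algebra ℂ X] [Algebra ℂ Y]
    (f : X →ₐ[ℂ] Y) (u : Xˣ) : ((uMap f u : Yˣ) : Y) = f (u : X) := rfl

lemma c1 (ι : A →ₐ[ℂ] V) :
    (iota3 A V ι).comp ((tauLast A).comp (a13 A)) = leg12 A V := by
  ext x <;>
  simp [iota3, tauLast, a13, leg12, commA, riM, Algebra.TensorProduct.one_def]

lemma c2 (ι : A →ₐ[ℂ] V) :
    (iota3 A V ι).comp ((tauLast A).comp (a12 A)) = (leg13 A V).comp (riM A V ι) := by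
  ext x <;>
  simp [iota3, tauLast, a12, leg13, commA, riM, Algebra.TensorProduct.one_def]

lemma c3 : idDop A = (tauLast A).comp (idDeltaA A) := by
  rw [idDop, tauLast, idDeltaA, ← Algebra.TensorProduct.map_comp, AlgHom.id_comp]

lemma c4 : ((tauLast A).comp (sigmaA A)).comp (deltaIdA A) = (idDop A).comp (commA A) := by
  ext x <;>
  simp [tauLast, sigmaA, deltaIdA, idDop, commA, Algebra.TensorProduct.one_def]

lemma c5 (ι : A →ₐ[ℂ] V) :
    (iota3 A V ι).comp (((tauLast A).comp (sigmaA A)).comp (a13 A)) =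
      ((leg13 A V).comp (riM A V ι)).comp (commA A) := by
  ext x <;>
  simp [iota3, tauLast, sigmaA, a13, leg13, commA, riM, Algebra.TensorProduct.one_def]

lemma c6 (ι : A →ₐ[ℂ] V) :
    (iota3 A V ι).comp (((tauLast A).comp (sigmaA A)).comp (a23 A)) =
      (leg12 A V).comp (commA A) := by
  ext x <;>
  simp [iota3, tauLast, sigmaA, a23, leg12, commA, riM, Algebra.TensorProduct.one_def]

lemma c7 : (tau12 A V).toAlgHom.comp (leg23 A V) = leg13 A V := by
  ext x <;>
  simp [tau12, leg23, leg13, Algebra.TensorProduct.one_def]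

lemma c8 : (tau12 A V).toAlgHom.comp (leg13 A V) = leg23 A V := by
  ext x <;>
  simp [tau12, leg23, leg13, Algebra.TensorProduct.one_def]

lemma leg12_eq (X : A ⊗[ℂ] A) :
    leg12 A V X = (Algebra.TensorProduct.assoc ℂ ℂ ℂ A A V) (X ⊗ₜ[ℂ] (1 : V)) := by
  induction X using TensorProduct.induction_on with
  | zero => simp
  | tmul a b => simp [leg12]
  | add x y hx hy =>
      simp only [map_add, TensorProduct.add_tmul] at *
      rw [hx, hy]

lemma tau12_assoc (Y : A ⊗[ℂ] A) (v : V) :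
    tau12 A V ((Algebra.TensorProduct.assoc ℂ ℂ ℂ A A V) (Y ⊗ₜ[ℂ] v)) =
      (Algebra.TensorProduct.assoc ℂ ℂ ℂ A A V)
        ((Algebra.TensorProduct.comm ℂ A A Y) ⊗ₜ[ℂ] v) := by
  simp [tau12]

lemma deltaId_tmul (a : A) (v : V) :
    deltaId A V (a ⊗ₜ[ℂ] v) =
      (Algebra.TensorProduct.assoc ℂ ℂ ℂ A A V) ((Bialgebra.comulAlgHom ℂ A a) ⊗ₜ[ℂ] v) := by
  simp [deltaId]

section Main

variable {A V}
variable (R : (A ⊗[ℂ] A)ˣ) (ι : A →ₐ[ℂ] V) (Φ : (A ⊗[ℂ] V)ˣ)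

lemma qtPlus
    (hR : ∀ a : A, (R : A ⊗[ℂ] A) * Bialgebra.comulAlgHom ℂ A a =
      Algebra.TensorProduct.comm ℂ A A (Bialgebra.comulAlgHom ℂ A a) * R)
    (w : A ⊗[ℂ] V) :
    leg12 A V R * deltaId A V w = tau12 A V (deltaId A V w) * leg12 A V R := by
  induction w using TensorProduct.induction_on with
  | zero => simp
  | tmul a v =>
      rw [deltaId_tmul, leg12_eq, tau12_assoc, ← map_mul, ← map_mul]
      congr 1
      rw [Algebra.TensorProduct.tmul_mul_tmul, Algebra.TensorProduct.tmul_mul_tmul,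
        hR a, one_mul, mul_one]
  | add x y hx hy => simp only [map_add, mul_add, add_mul] at *; rw [hx, hy]

lemma qtMinus
    (hR : ∀ a : A, (R : A ⊗[ℂ] A) * Bialgebra.comulAlgHom ℂ A a =
      Algebra.TensorProduct.comm ℂ A A (Bialgebra.comulAlgHom ℂ A a) * R)
    (w : A ⊗[ℂ] V) :
    leg12 A V (commA A R) * tau12 A V (deltaId A V w) =
      deltaId A V w * leg12 A V (commA A R) := by
  have hcc : ∀ y : A ⊗[ℂ] A, (Algebra.TensorProduct.comm ℂ A A)
      ((Algebra.TensorProduct.comm ℂ A A) y) = y := by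
    intro y
    induction y using TensorProduct.induction_on with
    | zero => simp
    | tmul x y => simp
    | add x y hx hy => simp only [map_add]; rw [hx, hy]
  have hR' : ∀ a : A, commA A R *
      (Algebra.TensorProduct.comm ℂ A A) (Bialgebra.comulAlgHom ℂ A a) =
      Bialgebra.comulAlgHom ℂ A a * commA A R := by
    intro a
    have h := congrArg (Algebra.TensorProduct.comm ℂ A A) (hR a)
    simp only [map_mul, hcc] at h
    exact h
  induction w using TensorProduct.induction_on with
  | zero => simp
  | tmul a v =>
      rw [deltaId_tmul, leg12_eq, tau12_assoc, ← map_mul, ← map_mul]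
      congr 1
      rw [Algebra.TensorProduct.tmul_mul_tmul, Algebra.TensorProduct.tmul_mul_tmul,
        hR' a, one_mul, mul_one]
  | add x y hx hy => simp only [map_add, mul_add, add_mul] at *; rw [hx, hy]

lemma covElt
    (hcov : ∀ x : A, ((1 : A) ⊗ₜ[ℂ] ι x) * (Φ : A ⊗[ℂ] V) =
      (Φ : A ⊗[ℂ] V) * Algebra.TensorProduct.map (AlgHom.id ℂ A) ι
        (Algebra.TensorProduct.comm ℂ A A (Bialgebra.comulAlgHom ℂ A x)))
    (r : A ⊗[ℂ] A) :
    leg13 A V (riM A V ι r) * leg23 A V (Φ : A ⊗[ℂ] V) =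
      leg23 A V (Φ : A ⊗[ℂ] V) * iota3 A V ι (idDop A r) := by
  induction r using TensorProduct.induction_on with
  | zero => simp
  | tmul a b =>
      simp only [riM, idDop, iota3, leg13, leg23, Algebra.TensorProduct.map_tmul,
        AlgHom.coe_id, id_eq, AlgHom.coe_comp, Function.comp_apply,
        Algebra.TensorProduct.includeRight_apply,
        Algebra.TensorProduct.tmul_mul_tmul, one_mul, mul_one]
      rw [hcov b]
      rfl
  | add x y hx hy => simp only [map_add, mul_add, add_mul] at *; rw [hx, hy]


lemma E1elt
    (hR2 : idDeltaA A (R : A ⊗[ℂ] A) = a13 A (R : A ⊗[ℂ] A) * a12 A (R : A ⊗[ℂ] A))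
    (hcov : ∀ x : A, ((1 : A) ⊗ₜ[ℂ] ι x) * (Φ : A ⊗[ℂ] V) =
      (Φ : A ⊗[ℂ] V) * Algebra.TensorProduct.map (AlgHom.id ℂ A) ι
        (Algebra.TensorProduct.comm ℂ A A (Bialgebra.comulAlgHom ℂ A x))) :
    leg13 A V (riM A V ι (R : A ⊗[ℂ] A)) * leg23 A V (Φ : A ⊗[ℂ] V) =
      leg23 A V (Φ : A ⊗[ℂ] V) *
        (leg12 A V (R : A ⊗[ℂ] A) * leg13 A V (riM A V ι (R : A ⊗[ℂ] A))) := by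
  rw [covElt ι Φ hcov]
  congr 1
  rw [c3 A, AlgHom.comp_apply, hR2, map_mul, map_mul,
    show iota3 A V ι ((tauLast A) ((a13 A) (R : A ⊗[ℂ] A))) =
      ((iota3 A V ι).comp ((tauLast A).comp (a13 A))) (R : A ⊗[ℂ] A) from rfl,
    c1 A V ι,
    show iota3 A V ι ((tauLast A) ((a12 A) (R : A ⊗[ℂ] A))) =
      ((iota3 A V ι).comp ((tauLast A).comp (a12 A))) (R : A ⊗[ℂ] A) from rfl,
    c2 A V ι, AlgHom.comp_apply]

lemma E2elt
    (hR1 : deltaIdA A (R : A ⊗[ℂ] A) = a13 A (R : A ⊗[ℂ] A) * a23 A (R : A ⊗[ℂ] A))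
    (hcov : ∀ x : A, ((1 : A) ⊗ₜ[ℂ] ι x) * (Φ : A ⊗[ℂ] V) =
      (Φ : A ⊗[ℂ] V) * Algebra.TensorProduct.map (AlgHom.id ℂ A) ι
        (Algebra.TensorProduct.comm ℂ A A (Bialgebra.comulAlgHom ℂ A x))) :
    leg13 A V (riM A V ι (commA A (R : A ⊗[ℂ] A))) * leg23 A V (Φ : A ⊗[ℂ] V) =
      leg23 A V (Φ : A ⊗[ℂ] V) *
        (leg13 A V (riM A V ι (commA A (R : A ⊗[ℂ] A))) *
          leg12 A V (commA A (R : A ⊗[ℂ] A))) := by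
  rw [covElt ι Φ hcov]
  congr 1
  have h4 : idDop A (commA A (R : A ⊗[ℂ] A)) =
      ((tauLast A).comp (sigmaA A)) (deltaIdA A (R : A ⊗[ℂ] A)) :=
    (DFunLike.congr_fun (c4 A) (R : A ⊗[ℂ] A)).symm
  rw [h4, hR1, map_mul, map_mul,
    show iota3 A V ι (((tauLast A).comp (sigmaA A)) ((a13 A) (R : A ⊗[ℂ] A))) =
      ((iota3 A V ι).comp (((tauLast A).comp (sigmaA A)).comp (a13 A))) (R : A ⊗[ℂ] A)
      from rfl,
    c5 A V ι,
    show iota3 A V ι (((tauLast A).comp (sigmaA A)) ((a23 A) (R : A ⊗[ℂ] A))) =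
      ((iota3 A V ι).comp (((tauLast A).comp (sigmaA A)).comp (a23 A))) (R : A ⊗[ℂ] A)
      from rfl,
    c6 A V ι]
  rfl

/-- The purely group-theoretic core of the computation. -/
lemma group_key {G : Type*} [Group G] (P1 P2 Dp Tp R12 R21 Ri Ri' : G)
    (u1 : Ri * P2 = P2 * (R12 * Ri))
    (u2 : Ri' * P2 = P2 * (Ri' * R21))
    (u3 : R12 * Dp = Tp * R12)
    (u4 : R21 * Tp = Dp * R21) :
    P1 * (Ri * Ri') * P1⁻¹ * (P1 * P2 * Tp⁻¹ * R21⁻¹ * (P2 * P1 * Dp⁻¹)⁻¹) =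
      P1 * P2 * Tp⁻¹ * R12 * (P2 * P1 * Dp⁻¹)⁻¹ *
        (P2 * (P1 * (Ri * Ri') * P1⁻¹) * P2⁻¹) := by
  have hDp : R21 * Tp * R21⁻¹ = Dp := by
    rw [u4, mul_assoc, mul_inv_cancel, mul_one]
  have hDp2 : R12⁻¹ * (Tp * R12) = Dp := by
    rw [← u3, inv_mul_cancel_left]
  have u3' : ∀ x : G, Tp⁻¹ * (R12 * (Dp * x)) = R12 * x := fun x => by
    rw [← hDp2]; group
  have u4' : ∀ x : G, Tp⁻¹ * (R21⁻¹ * (Dp * x)) = R21⁻¹ * x := fun x => by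
    rw [← hDp]; group
  have u1' : ∀ x : G, Ri * (P2 * x) = P2 * (R12 * (Ri * x)) := fun x => by
    rw [← mul_assoc, u1]; group
  have u2' : ∀ x : G, Ri' * (P2 * x) = P2 * (Ri' * (R21 * x)) := fun x => by
    rw [← mul_assoc, u2]; group
  simp only [mul_inv_rev, inv_inv, mul_assoc, inv_mul_cancel_left, mul_inv_cancel_left]
  rw [u4', u3', u2']
  simp only [mul_inv_cancel_left]
  rw [u1']

end Main

set_option maxHeartbeats 1600000 in
/-- exchange relation between `D` and the braiding matrices:
`D₁₃ · R̂₋ = R̂₊ · (Φ₂ · D₁₃ · Φ₂⁻¹)` in `A ⊗ A ⊗ V`. -/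
theorem D_braiding_exchange (R : (A ⊗[ℂ] A)ˣ)
    (hR : ∀ a : A, (R : A ⊗[ℂ] A) * Bialgebra.comulAlgHom ℂ A a =
      Algebra.TensorProduct.comm ℂ A A (Bialgebra.comulAlgHom ℂ A a) * R)
    (hR1 : deltaIdA A (R : A ⊗[ℂ] A) = a13 A (R : A ⊗[ℂ] A) * a23 A (R : A ⊗[ℂ] A))
    (hR2 : idDeltaA A (R : A ⊗[ℂ] A) = a13 A (R : A ⊗[ℂ] A) * a12 A (R : A ⊗[ℂ] A))
    (ι : A →ₐ[ℂ] V) (Φ : (A ⊗[ℂ] V)ˣ)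
    (hcov : ∀ x : A, ((1 : A) ⊗ₜ[ℂ] ι x) * (Φ : A ⊗[ℂ] V) =
      (Φ : A ⊗[ℂ] V) * Algebra.TensorProduct.map (AlgHom.id ℂ A) ι
        (Algebra.TensorProduct.comm ℂ A A (Bialgebra.comulAlgHom ℂ A x))) :
    uMap (leg13 A V) (dElt A V ι R Φ) * rrMinus A V R Φ =
      rrPlus A V R Φ *
        (uMap (leg23 A V) Φ * uMap (leg13 A V) (dElt A V ι R Φ) * (uMap (leg23 A V) Φ)⁻¹) := by
  have u1 : uMap ((leg13 A V).comp (riM A V ι)) R * uMap (leg23 A V) Φ =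
      uMap (leg23 A V) Φ *
        (uMap (leg12 A V) R * uMap ((leg13 A V).comp (riM A V ι)) R) := by
    refine Units.ext ?_
    show leg13 A V (riM A V ι (R : A ⊗[ℂ] A)) * leg23 A V (Φ : A ⊗[ℂ] V) =
      leg23 A V (Φ : A ⊗[ℂ] V) *
        (leg12 A V (R : A ⊗[ℂ] A) * leg13 A V (riM A V ι (R : A ⊗[ℂ] A)))
    exact E1elt R ι Φ hR2 hcov
  have u2 : uMap (((leg13 A V).comp (riM A V ι)).comp (commA A)) R * uMap (leg23 A V) Φ =
      uMap (leg23 A V) Φ *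
        (uMap (((leg13 A V).comp (riM A V ι)).comp (commA A)) R *
          uMap ((leg12 A V).comp (commA A)) R) := by
    refine Units.ext ?_
    show leg13 A V (riM A V ι (commA A (R : A ⊗[ℂ] A))) * leg23 A V (Φ : A ⊗[ℂ] V) =
      leg23 A V (Φ : A ⊗[ℂ] V) *
        (leg13 A V (riM A V ι (commA A (R : A ⊗[ℂ] A))) *
          leg12 A V (commA A (R : A ⊗[ℂ] A)))
    exact E2elt R ι Φ hR1 hcov
  have u3 : uMap (leg12 A V) R * uMap (deltaId A V) Φ =
      uMap ((tau12 A V).toAlgHom.comp (deltaId A V)) Φ * uMap (leg12 A V) R := by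
    refine Units.ext ?_
    show leg12 A V (R : A ⊗[ℂ] A) * deltaId A V (Φ : A ⊗[ℂ] V) =
      tau12 A V (deltaId A V (Φ : A ⊗[ℂ] V)) * leg12 A V (R : A ⊗[ℂ] A)
    exact qtPlus R hR (Φ : A ⊗[ℂ] V)
  have u4 : uMap ((leg12 A V).comp (commA A)) R *
        uMap ((tau12 A V).toAlgHom.comp (deltaId A V)) Φ =
      uMap (deltaId A V) Φ * uMap ((leg12 A V).comp (commA A)) R := by
    refine Units.ext ?_
    show leg12 A V (commA A (R : A ⊗[ℂ] A)) * tau12 A V (deltaId A V (Φ : A ⊗[ℂ] V)) =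
      deltaId A V (Φ : A ⊗[ℂ] V) * leg12 A V (commA A (R : A ⊗[ℂ] A))
    exact qtMinus R hR (Φ : A ⊗[ℂ] V)
  have hN : uMap (leg13 A V) (nElt A V ι R) =
      uMap ((leg13 A V).comp (riM A V ι)) R *
        uMap (((leg13 A V).comp (riM A V ι)).comp (commA A)) R := by
    refine Units.ext ?_
    show leg13 A V ((riM A V ι) ((R : A ⊗[ℂ] A) * commA A (R : A ⊗[ℂ] A))) = _
    rw [map_mul, map_mul]
    rfl
  have hD13 : uMap (leg13 A V) (dElt A V ι R Φ) =
      uMap (leg13 A V) Φ *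
        (uMap ((leg13 A V).comp (riM A V ι)) R *
          uMap (((leg13 A V).comp (riM A V ι)).comp (commA A)) R) *
        (uMap (leg13 A V) Φ)⁻¹ := by
    rw [dElt, map_mul, map_mul, map_inv, hN]
  have hTF : uMap (tau12 A V).toAlgHom (fusion A V Φ) =
      uMap (leg13 A V) Φ * uMap (leg23 A V) Φ *
        (uMap ((tau12 A V).toAlgHom.comp (deltaId A V)) Φ)⁻¹ := by
    rw [fusion, map_mul, map_mul, map_inv, uMap_uMap, uMap_uMap, uMap_uMap,
      c7, c8]
  have hR21inv : uMap (leg12 A V) ((uMap (Algebra.TensorProduct.comm ℂ A A).toAlgHom R)⁻¹) =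
      (uMap ((leg12 A V).comp (commA A)) R)⁻¹ := by
    rw [map_inv, uMap_uMap]
    rfl
  rw [hD13]
  unfold rrMinus rrPlus
  rw [hTF, hR21inv]
  unfold fusion
  exact group_key _ _ _ _ _ _ _ _ u1 u2 u3 u4


end Stmt6
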